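/- The Tamari order on binary trees, defined as the transitive closure of right rotation (replacing a subtree y(x(A,B),C) by x(A,y(B,C))), is a lattice quotient of the right weak order on permutations via the binary search tree map: if σ ≤ μ in right weak order then ABR(σ) ≤ ABR(μ) in the Tamari order. -/

import Mathlib

/-- Unlabelled binary trees. -/
inductive Tree0 where
  | leaf : Tree0
  | node : Tree0 → Tree0 → Tree0
deriving DecidableEq

namespace Tree0

/-- One right rotation somewhere in the tree: `y(x(A,B),C) ↦ x(A,y(B,C))`. -/
inductive Rot : Tree0 → Tree0 → Prop
  | root (A B C : Tree0) : Rot (node (node A B) C) (node A (node B C))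
  | left {l l' : Tree0} (r : Tree0) : Rot l l' → Rot (node l r) (node l' r)
  | right (l : Tree0) {r r' : Tree0} : Rot r r' → Rot (node l r) (node l r')

/-- The Tamari order: transitive closure of right rotation. -/
def tamariLE : Tree0 → Tree0 → Prop := Relation.ReflTransGen Rot

end Tree0

/-- Labelled binary trees (labels in `ℕ`). -/
inductive BT where
  | leaf : BT
  | node : BT → ℕ → BT → BT
deriving DecidableEq

namespace BT

/-- Binary search tree insertion: `k` goes left if `≤` the root, right if `>`. -/
def bstInsert (k : ℕ) : BT → BT
  | leaf => node leaf k leaf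
  | node l x r => if k ≤ x then node (bstInsert k l) x r else node l x (bstInsert k r)

/-- Insert the letters of a word from right to left into an empty BST. -/
def abr (w : List ℕ) : BT := w.foldr bstInsert leaf

/-- Underlying unlabelled shape. -/
def shape : BT → Tree0
  | leaf => Tree0.leaf
  | node l _ r => Tree0.node (shape l) (shape r)

end BT

/-- The word of values of a permutation of `{1,…,n}`. -/
def wordOf {n : ℕ} (σ : Equiv.Perm (Fin n)) : List ℕ :=
  List.ofFn fun i => (σ i : ℕ) + 1

/-- The binary search tree shape of a permutation. -/
def abrShape {n : ℕ} (σ : Equiv.Perm (Fin n)) : Tree0 :=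
  BT.shape (BT.abr (wordOf σ))

/-- The right weak order: generated by `σ ⋖ σsᵢ` when `σ(i) < σ(i+1)`. -/
def rightWeakLE (n : ℕ) (σ μ : Equiv.Perm (Fin n)) : Prop :=
  Relation.ReflTransGen
    (fun a b => ∃ (i : ℕ) (h : i + 1 < n),
      a (⟨i, Nat.lt_of_succ_lt h⟩ : Fin n) < a ⟨i + 1, h⟩ ∧
      b = a * Equiv.swap (⟨i, Nat.lt_of_succ_lt h⟩ : Fin n) ⟨i + 1, h⟩) σ μ

/-!
For letters `a < b`, inserting `b` and then `a` into a binary search tree gives the same tree as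
inserting `a` and then `b` if their search paths separate at some node; otherwise both letters
end at the same leaf, and the two trees differ by one right rotation of the pair `a ≤ b`.
A rotation `y(x(A,B),C) ↦ x(A,y(B,C))` with `x ≤ y` commutes with every later insertion, since
the new key compares the same way with `x` and `y` in both trees. Hence swapping an ascent of a
word changes its binary search tree by at most one right rotation.
-/

namespace List

theorem ofFn_eq_take_append_cons_cons_drop {α : Type*} {n : ℕ} (f : Fin n → α) (i : ℕ)
    (hi : i + 1 < n) :
    ofFn f = (ofFn f).take i ++ f ⟨i, by omega⟩ :: f ⟨i + 1, hi⟩ :: (ofFn f).drop (i + 2) := by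
  conv_lhs => rw [← take_append_drop i (ofFn f)]
  rw [drop_eq_getElem_cons (by simp; omega), drop_eq_getElem_cons (by simpa)]
  simp only [List.getElem_ofFn]

theorem ofFn_comp_swap_succ {α : Type*} {n : ℕ} (f : Fin n → α) (i : ℕ) (hi : i + 1 < n) :
    ofFn (f ∘ Equiv.swap ⟨i, by omega⟩ ⟨i + 1, hi⟩) =
      (ofFn f).take i ++ f ⟨i + 1, hi⟩ :: f ⟨i, by omega⟩ :: (ofFn f).drop (i + 2) := by
  refine ext_getElem (by simp; omega) fun j _ _ => ?_
  have hmin : min i n = i := by omega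
  simp only [List.getElem_ofFn, Function.comp_apply, getElem_append, getElem_cons, getElem_take,
    getElem_drop, length_take, length_ofFn, hmin]
  rcases lt_or_ge j i with hj | hj
  · rw [Equiv.swap_apply_of_ne_of_ne] <;> simp [Fin.ext_iff, hj] <;> omega
  obtain ⟨k, rfl⟩ := Nat.exists_eq_add_of_le hj
  match k with
  | 0 => simp
  | 1 => simp
  | k + 2 =>
    rw [Equiv.swap_apply_of_ne_of_ne (by simp [Fin.ext_iff]) (by simp [Fin.ext_iff]),
      dif_neg (by omega), dif_neg (by omega), dif_neg (by omega)]
    congr 1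
    simp only [Fin.mk.injEq]
    omega

end List

namespace BT

inductive Rot : BT → BT → Prop
  | root {x y : ℕ} (hxy : x ≤ y) (A B C : BT) :
      Rot (node (node A x B) y C) (node A x (node B y C))
  | left {l l' : BT} (x : ℕ) (r : BT) : Rot l l' → Rot (node l x r) (node l' x r)
  | right (l : BT) (x : ℕ) {r r' : BT} : Rot r r' → Rot (node l x r) (node l x r')

theorem Rot.shape {t₁ t₂ : BT} (h : Rot t₁ t₂) : Tree0.Rot t₁.shape t₂.shape := by
  induction h with
  | root _ A B C => exact Tree0.Rot.root _ _ _
  | left x r _ ih => exact Tree0.Rot.left _ ih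
  | right l x _ ih => exact Tree0.Rot.right _ ih

theorem Rot.bstInsert (k : ℕ) {t₁ t₂ : BT} (h : Rot t₁ t₂) :
    Rot (t₁.bstInsert k) (t₂.bstInsert k) := by
  induction h with
  | @root x y hxy A B C =>
    by_cases hky : k ≤ y
    · by_cases hkx : k ≤ x
      · simpa only [BT.bstInsert, if_pos hkx, if_pos hky] using Rot.root hxy _ _ _
      · simpa only [BT.bstInsert, if_pos hky, if_neg hkx] using Rot.root hxy _ _ _
    · have hkx : ¬k ≤ x := fun hkx => hky (hkx.trans hxy)
      simpa only [BT.bstInsert, if_neg hkx, if_neg hky] using Rot.root hxy _ _ _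
  | left x r h ih =>
    by_cases hkx : k ≤ x
    · simpa only [BT.bstInsert, if_pos hkx] using Rot.left _ _ ih
    · simpa only [BT.bstInsert, if_neg hkx] using Rot.left _ _ h
  | right l x h ih =>
    by_cases hkx : k ≤ x
    · simpa only [BT.bstInsert, if_pos hkx] using Rot.right _ _ h
    · simpa only [BT.bstInsert, if_neg hkx] using Rot.right _ _ ih

theorem reflTransGen_rot_bstInsert_swap {a b : ℕ} (hab : a < b) (t : BT) :
    Relation.ReflTransGen Rot (bstInsert a (bstInsert b t)) (bstInsert b (bstInsert a t)) := by
  induction t with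
  | leaf =>
    simpa only [bstInsert, if_pos hab.le, if_neg hab.not_ge] using
      Relation.ReflTransGen.single (Rot.root hab.le leaf leaf leaf)
  | node l x r ihl ihr =>
    by_cases hbx : b ≤ x
    · simpa only [bstInsert, if_pos hbx, if_pos (hab.le.trans hbx)] using
        ihl.lift (node · x r) fun _ _ h => Rot.left _ _ h
    by_cases hax : a ≤ x
    · simp only [bstInsert, if_pos hax, if_neg hbx, Relation.ReflTransGen.refl]
    · simpa only [bstInsert, if_neg hax, if_neg hbx] using
        ihr.lift (node l x ·) fun _ _ h => Rot.right _ _ h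

theorem reflTransGen_rot_abr_swap {a b : ℕ} (hab : a < b) (u v : List ℕ) :
    Relation.ReflTransGen Rot (abr (u ++ a :: b :: v)) (abr (u ++ b :: a :: v)) := by
  induction u with
  | nil => exact reflTransGen_rot_bstInsert_swap hab (abr v)
  | cons k u ih => simpa [abr] using ih.lift (bstInsert k) fun _ _ h => h.bstInsert k

end BT

theorem abrShape_tamariLE_mul_swap {n : ℕ} (σ : Equiv.Perm (Fin n)) (i : ℕ) (hi : i + 1 < n)
    (hlt : σ ⟨i, by omega⟩ < σ ⟨i + 1, hi⟩) :
    Tree0.tamariLE (abrShape σ) (abrShape (σ * Equiv.swap ⟨i, by omega⟩ ⟨i + 1, hi⟩)) := by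
  let f : Fin n → ℕ := fun j => (σ j : ℕ) + 1
  have hσ : wordOf σ = _ := List.ofFn_eq_take_append_cons_cons_drop f i hi
  have hμ : wordOf (σ * Equiv.swap _ _) = _ := List.ofFn_comp_swap_succ f i hi
  unfold abrShape
  rw [hσ, hμ]
  exact (BT.reflTransGen_rot_abr_swap (Nat.succ_lt_succ hlt) _ _).lift _ fun _ _ h => h.shape

/-- The binary search tree map is order preserving from the right weak
order to the Tamari order: if `σ ≤ μ` in right weak order then `ABR(σ) ≤ ABR(μ)` in the
Tamari order (the Tamari order being a lattice quotient of the weak order). -/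
theorem tamari_quotient_of_weak_order (n : ℕ) (σ μ : Equiv.Perm (Fin n))
    (h : rightWeakLE n σ μ) :
    Tree0.tamariLE (abrShape σ) (abrShape μ) :=
  Relation.ReflTransGen.lift' abrShape
    (fun _ _ ⟨i, hi, hlt, hμ⟩ => hμ ▸ abrShape_tamariLE_mul_swap _ i hi hlt) _ _ h
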